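/- Let u_θ > 0, ω = 2u_θ, and for β ∈ ℕ (β ≥ 1) let S̄_β(x) = S_β(x + (-1)^β/(2β)), where S_β(x) = 1 for x > 1/β, S_β(x) = 1/2 + (βx)/2 for -1/β ≤ x ≤ 1/β, and S_β(x) = 0 for x < -1/β. Let u_β : [0,T] → ℝ be differentiable with u_β(0) = u_θ and u_β'(t) = -u_β(t) + ω S̄_β(u_β(t) - u_θ) for all t ∈ [0,T]. Then u_β'(0) = u_θ/2 > 0 if β is even and u_β'(0) = -u_θ/2 < 0 if β is odd; in particular there is a constant c = u_θ/2 > 0, independent of β, such that u_β'(0) > c for all even β and u_β'(0) < -c for all odd β. -/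

import Mathlib

open Set Finset Filter MeasureTheory

/-- The piecewise linear firing rate function with slope `β/2` (see (20) in the paper). -/
noncomputable def Spl (β : ℕ) (x : ℝ) : ℝ :=
  if 1 / (β : ℝ) < x then 1
  else if x < -(1 / (β : ℝ)) then 0
  else 1/2 + (β : ℝ) * x / 2

/-- The shifted firing rate functions `S̄_β(x) = S_β(x + (-1)^β/(2β))`. -/
noncomputable def SplBar (β : ℕ) (x : ℝ) : ℝ :=
  Spl β (x + (-1 : ℝ) ^ β / (2 * (β : ℝ)))

/- At `t = 0` the ODE reads `u'(0) = -u_θ + 2 u_θ S̄_β(0)`, and the shift `(-1)^β/(2β)` lies in the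
linear range of `S_β`, so `S̄_β(0) = 1/2 + (-1)^β/4` and `u'(0) = (-1)^β u_θ / 2`. -/

theorem Spl_of_abs_le {β : ℕ} {x : ℝ} (hx : |x| ≤ 1 / β) : Spl β x = 1 / 2 + β * x / 2 := by
  rw [abs_le] at hx
  rw [Spl, if_neg (not_lt.2 hx.2), if_neg (not_lt.2 hx.1)]

theorem SplBar_zero {β : ℕ} (hβ : β ≠ 0) : SplBar β 0 = 1 / 2 + (-1) ^ β / 4 := by
  have hβ' : (0 : ℝ) < β := by positivity
  have hshift : |(-1 : ℝ) ^ β / (2 * β)| ≤ 1 / β := by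
    rw [abs_div, abs_pow, abs_neg, abs_one, one_pow, abs_of_pos (by positivity),
      div_le_div_iff₀ (by positivity) hβ']
    linarith
  rw [SplBar, zero_add, Spl_of_abs_le hshift]
  field_simp
  ring

theorem stmt_17_general
    (uθ ω T : ℝ) (huθ : 0 < uθ) (hω : ω = 2 * uθ) (hT : 0 < T)
    (u u' : ℕ → ℝ → ℝ)
    (hinit : ∀ β : ℕ, 1 ≤ β → u β 0 = uθ)
    (hODE : ∀ β : ℕ, 1 ≤ β → ∀ t ∈ Set.Icc (0:ℝ) T,
      u' β t = -u β t + ω * SplBar β (u β t - uθ)) :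
    (∀ β : ℕ, 1 ≤ β → Even β → u' β 0 = uθ / 2) ∧
    (∀ β : ℕ, 1 ≤ β → Odd β → u' β 0 = -(uθ / 2)) ∧
    0 < uθ / 2 ∧
    (∃ c > (0:ℝ), ∀ β : ℕ, 1 ≤ β →
      (Even β → u' β 0 ≥ c) ∧ (Odd β → u' β 0 ≤ -c)) := by
  have hinitial_slope : ∀ β : ℕ, 1 ≤ β → u' β 0 = (-1) ^ β * uθ / 2 := by
    intro β hβ
    rw [hODE β hβ 0 ⟨le_rfl, hT.le⟩, hinit β hβ, sub_self, SplBar_zero (by omega), hω]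
    ring
  have heven : ∀ β : ℕ, 1 ≤ β → Even β → u' β 0 = uθ / 2 := fun β hβ he => by
    rw [hinitial_slope β hβ, he.neg_one_pow, one_mul]
  have hodd : ∀ β : ℕ, 1 ≤ β → Odd β → u' β 0 = -(uθ / 2) := fun β hβ ho => by
    rw [hinitial_slope β hβ, ho.neg_one_pow]
    ring
  refine ⟨heven, hodd, half_pos huθ, uθ / 2, half_pos huθ, fun β hβ => ⟨?_, ?_⟩⟩
  · exact fun he => (heven β hβ he).ge
  · exact fun ho => (hodd β hβ ho).le

theorem stmt_17
    (uθ ω T : ℝ) (huθ : 0 < uθ) (hω : ω = 2 * uθ) (hT : 0 < T)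
    (u u' : ℕ → ℝ → ℝ)
    (hderiv : ∀ β : ℕ, 1 ≤ β → ∀ t ∈ Set.Icc (0:ℝ) T,
      HasDerivWithinAt (u β) (u' β t) (Set.Icc 0 T) t)
    (hinit : ∀ β : ℕ, 1 ≤ β → u β 0 = uθ)
    (hODE : ∀ β : ℕ, 1 ≤ β → ∀ t ∈ Set.Icc (0:ℝ) T,
      u' β t = -u β t + ω * SplBar β (u β t - uθ)) :
    (∀ β : ℕ, 1 ≤ β → Even β → u' β 0 = uθ / 2) ∧
    (∀ β : ℕ, 1 ≤ β → Odd β → u' β 0 = -(uθ / 2)) ∧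
    0 < uθ / 2 ∧
    (∃ c > (0:ℝ), ∀ β : ℕ, 1 ≤ β →
      (Even β → u' β 0 ≥ c) ∧ (Odd β → u' β 0 ≤ -c)) :=
  stmt_17_general uθ ω T huθ hω hT u u' hinit hODE
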